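/- Let k ≥ 2 be an integer. For n ≥ 1 let R⁺(n) denote the number of triples of positive integers (x_1, x_2, x_3) with x_1^k + x_2^k + x_3^k = n. Then for every ε > 0 there exists a constant C > 0 such that for all n ≥ 1, R⁺(n) ≤ C · n^{ 3/(2k) + ε }. -/

import Mathlib

/-!
Let `A` be the set of positive `k`-th powers up to `n`, so `#A ≤ n ^ (1/k)`. Splitting the
triples `a + b + c = n` in `A³` according to `c`, Cauchy–Schwarz bounds their number squared
by `#A` times the additive energy `E[A]`. For fixed `a ≠ b` in `A`, a solution of
`a + z^k = b + w^k` is determined by `|z - w|`, a divisor of `|a - b|`, because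
`x ↦ (x + e)^k - x^k` is strictly increasing; so the divisor bound gives
`E[A] ≤ #A² (1 + O(n^{2ε}))`, whence `R⁺(n)² ≪ n^{3/k + 2ε}`.
-/

open Finset
open scoped Combinatorics.Additive

lemma add_one_le_pow_of_two_le {q : ℝ} (hq : 2 ≤ q) (a : ℕ) : (a : ℝ) + 1 ≤ q ^ a :=
  calc (a : ℝ) + 1 ≤ 2 ^ a := by exact_mod_cast Nat.lt_two_pow_self
    _ ≤ q ^ a := pow_le_pow_left₀ (by norm_num) hq a

lemma add_one_le_mul_rpow_pow {ε p : ℝ} (hε : 0 < ε) (hp : 2 ≤ p) (a : ℕ) :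
    (a : ℝ) + 1 ≤ (1 + (ε * Real.log 2)⁻¹) * (p ^ ε) ^ a := by
  have hc : 0 < ε * Real.log 2 := by positivity
  have hexp : 1 + a * (ε * Real.log 2) ≤ (p ^ ε) ^ a :=
    calc 1 + a * (ε * Real.log 2) ≤ Real.exp (a * (ε * Real.log 2)) := by
          linarith [Real.add_one_le_exp (a * (ε * Real.log 2))]
      _ = ((2 : ℝ) ^ ε) ^ a := by
          rw [Real.exp_nat_mul, Real.rpow_def_of_pos two_pos, mul_comm ε]
      _ ≤ (p ^ ε) ^ a := by gcongr
  calc (a : ℝ) + 1 ≤ a + 1 + a * (ε * Real.log 2) + (ε * Real.log 2)⁻¹ := by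
        have := inv_pos.2 hc
        have : (0 : ℝ) ≤ a := a.cast_nonneg
        nlinarith
    _ = (1 + (ε * Real.log 2)⁻¹) * (1 + a * (ε * Real.log 2)) := by
        field_simp
        ring
    _ ≤ (1 + (ε * Real.log 2)⁻¹) * (p ^ ε) ^ a := by gcongr

lemma Nat.cast_rpow_eq_prod_primeFactors {h : ℕ} (hh : h ≠ 0) (ε : ℝ) :
    (h : ℝ) ^ ε = ∏ p ∈ h.primeFactors, ((p : ℝ) ^ ε) ^ h.factorization p := by
  conv_lhs =>
    rw [← Nat.prod_factorization_pow_eq_self hh, Nat.prod_factorization_eq_prod_primeFactors]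
  push_cast
  rw [← Real.finsetProd_rpow _ _ fun p _ => by positivity]
  refine prod_congr rfl fun p _ => ?_
  rw [← Real.rpow_natCast, ← Real.rpow_natCast, ← Real.rpow_mul p.cast_nonneg,
    ← Real.rpow_mul p.cast_nonneg, mul_comm]

theorem Nat.exists_card_divisors_le_mul_rpow {ε : ℝ} (hε : 0 < ε) :
    ∃ C : ℝ, 0 < C ∧ ∀ h : ℕ, h ≠ 0 → (#h.divisors : ℝ) ≤ C * (h : ℝ) ^ ε := by
  set B : ℝ := 1 + (ε * Real.log 2)⁻¹
  set P : ℕ := ⌈(2 : ℝ) ^ ε⁻¹⌉₊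
  have hB : 1 ≤ B := by simp only [B]; linarith [inv_pos.2 (by positivity : 0 < ε * Real.log 2)]
  -- only the primes below `2 ^ (1 / ε)` need a constant: beyond them `p ^ ε ≥ 2`
  have hlocal : ∀ p : ℕ, p.Prime → ∀ a : ℕ,
      (a : ℝ) + 1 ≤ (if p < P then B else 1) * ((p : ℝ) ^ ε) ^ a := by
    intro p hp a
    have hp2 : (2 : ℝ) ≤ p := by exact_mod_cast hp.two_le
    split_ifs with hpP
    · exact add_one_le_mul_rpow_pow hε hp2 a
    · rw [one_mul]
      refine add_one_le_pow_of_two_le ?_ a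
      calc (2 : ℝ) = ((2 : ℝ) ^ ε⁻¹) ^ ε := by
            rw [← Real.rpow_mul zero_le_two, inv_mul_cancel₀ hε.ne', Real.rpow_one]
        _ ≤ (p : ℝ) ^ ε := by
            gcongr
            exact (Nat.le_ceil _).trans (by exact_mod_cast not_lt.1 hpP)
  refine ⟨B ^ P, by positivity, fun h hh => ?_⟩
  have hsmall : ∏ p ∈ h.primeFactors, (if p < P then B else 1) ≤ B ^ P := by
    rw [prod_ite, prod_const, prod_const_one, mul_one]
    exact pow_le_pow_right₀ hB <| (card_le_card fun p hp => mem_range.2 (mem_filter.1 hp).2).trans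
      (card_range P).le
  rw [Nat.card_divisors hh, Nat.cast_rpow_eq_prod_primeFactors hh]
  push_cast
  calc ∏ p ∈ h.primeFactors, ((h.factorization p : ℝ) + 1)
      ≤ ∏ p ∈ h.primeFactors, (if p < P then B else 1) * ((p : ℝ) ^ ε) ^ h.factorization p :=
        prod_le_prod (fun _ _ => by positivity)
          fun p hp => hlocal p (Nat.prime_of_mem_primeFactors hp) _
    _ ≤ B ^ P * ∏ p ∈ h.primeFactors, ((p : ℝ) ^ ε) ^ h.factorization p := by
        rw [prod_mul_distrib]
        gcongr

lemma strictMono_add_pow_sub_pow {k e : ℕ} (hk : 2 ≤ k) (he : 0 < e) :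
    StrictMono fun b : ℕ => (b + e) ^ k - b ^ k := by
  have hexpand : ∀ b : ℕ,
      (b + e) ^ k - b ^ k = ∑ i ∈ range k, b ^ i * e ^ (k - i) * k.choose i := by
    intro b
    rw [add_pow, sum_range_succ]
    simp
  intro b b' hb
  simp only [hexpand]
  refine sum_lt_sum (fun i _ => by gcongr) ⟨1, mem_range.2 (by omega), ?_⟩
  simp only [pow_one, Nat.choose_one_right]
  gcongr

lemma card_filter_pow_eq_pow_add_le {k h : ℕ} (hk : 2 ≤ k) (hh : h ≠ 0) (s : Finset (ℕ × ℕ)) :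
    #{x ∈ s | x.1 ^ k = x.2 ^ k + h} ≤ #h.divisors := by
  have hlt : ∀ x : ℕ × ℕ, x.1 ^ k = x.2 ^ k + h → x.2 < x.1 := fun x hx =>
    lt_of_pow_lt_pow_left₀ k (Nat.zero_le _) (by omega)
  refine card_le_card_of_injOn (fun x => x.1 - x.2) (fun x hx => ?_) fun x hx y hy hxy => ?_
  · simp only [coe_filter, Set.mem_ofPred_eq] at hx
    refine Nat.mem_divisors.2 ⟨?_, hh⟩
    simpa [hx.2] using Nat.sub_dvd_pow_sub_pow x.1 x.2 k
  · simp only [coe_filter, Set.mem_ofPred_eq] at hx hy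
    have hxy : x.1 - x.2 = y.1 - y.2 := hxy
    have hx1 := hlt x hx.2
    have hy1 := hlt y hy.2
    set e := x.1 - x.2
    have hx' : x.1 = x.2 + e := by omega
    have hy' : y.1 = y.2 + e := by omega
    have h2 : x.2 = y.2 := (strictMono_add_pow_sub_pow (e := e) hk (by omega)).injective <| by
      rw [← hx', ← hy']
      omega
    exact Prod.ext (by omega) h2

lemma card_filter_add_pow_eq_add_pow_le {k a b : ℕ} (hk : 2 ≤ k) (hab : a ≠ b)
    (s : Finset (ℕ × ℕ)) : #{x ∈ s | a + x.1 ^ k = b + x.2 ^ k} ≤ #(Nat.dist a b).divisors := by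
  wlog hlt : a < b generalizing a b s
  · calc #{x ∈ s | a + x.1 ^ k = b + x.2 ^ k}
        = #{x ∈ s.image Prod.swap | b + x.1 ^ k = a + x.2 ^ k} := by
          rw [filter_image, card_image_of_injective _ Prod.swap_injective]
          simp only [Prod.fst_swap, Prod.snd_swap, eq_comm]
      _ ≤ #(Nat.dist a b).divisors := by
          rw [Nat.dist_comm]
          exact this hab.symm _ (by omega)
  rw [Nat.dist_eq_sub_of_le hlt.le]
  convert card_filter_pow_eq_pow_add_le hk (Nat.sub_ne_zero_of_lt hlt) s using 3
  omega

lemma card_filter_image_pow_add_eq_add_le {k a b : ℕ} (hk : 2 ≤ k) (hab : a ≠ b) (I : Finset ℕ) :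
    #{x ∈ I.image (· ^ k) ×ˢ I.image (· ^ k) | a + x.1 = b + x.2} ≤ #(Nat.dist a b).divisors := by
  rw [← prodMap_image_product, filter_image]
  exact card_image_le.trans (card_filter_add_pow_eq_add_pow_le hk hab _)

section AddEnergy

variable {M : Type*} [AddCancelCommMonoid M] [DecidableEq M]

lemma card_filter_add_add_eq_sq_le (A : Finset M) (n : M) :
    #{x ∈ A ×ˢ A ×ˢ A | x.1 + x.2.1 + x.2.2 = n} ^ 2 ≤ #A * E[A] := by
  set F : M → Finset (M × M) := fun c => {p ∈ A ×ˢ A | c + p.1 + p.2 = n}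
  have hsplit : #{x ∈ A ×ˢ A ×ˢ A | x.1 + x.2.1 + x.2.2 = n} = ∑ c ∈ A, #(F c) := by
    simp only [F, card_filter, sum_product]
  -- two pairs over the same `c` have the same sum, and that sum determines `c`
  have hsq : ∑ c ∈ A, #(F c) ^ 2 ≤ E[A] := by
    simp only [sq, ← card_product]
    rw [← card_sigma, addEnergy_eq_card_filter]
    refine card_le_card_of_injOn Sigma.snd (fun x hx => ?_) fun x hx y hy hxy => ?_
    · simp only [coe_sigma, Set.mem_sigma_iff, coe_product, Set.mem_prod, mem_coe, F,
        mem_filter] at hx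
      simp only [coe_filter, Set.mem_ofPred_eq]
      refine ⟨mem_product.2 ⟨hx.2.1.1, hx.2.2.1⟩, add_left_cancel (a := x.1) ?_⟩
      rw [← add_assoc, ← add_assoc, hx.2.1.2, hx.2.2.2]
    · simp only [coe_sigma, Set.mem_sigma_iff, coe_product, Set.mem_prod, mem_coe, F,
        mem_filter] at hx hy
      refine Sigma.ext (add_right_cancel (b := x.2.1.1 + x.2.1.2) ?_) (heq_of_eq hxy)
      rw [← add_assoc, hx.2.1.2, hxy, ← add_assoc, hy.2.1.2]
  calc #{x ∈ A ×ˢ A ×ˢ A | x.1 + x.2.1 + x.2.2 = n} ^ 2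
      ≤ #A * ∑ c ∈ A, #(F c) ^ 2 := hsplit ▸ sq_sum_le_card_mul_sum_sq
    _ ≤ #A * E[A] := by gcongr

lemma addEnergy_le_card_sq_mul_succ (A : Finset M) {m : ℕ}
    (hm : ∀ a ∈ A, ∀ b ∈ A, a ≠ b → #{x ∈ A ×ˢ A | a + x.1 = b + x.2} ≤ m) :
    E[A] ≤ #A ^ 2 * (m + 1) := by
  have hfiber : ∀ w ∈ A ×ˢ A,
      #{x ∈ A ×ˢ A | w.1 + x.1 = w.2 + x.2} ≤ m + if w.1 = w.2 then #A else 0 := by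
    intro w hw
    rw [mem_product] at hw
    split_ifs with hab
    · simp only [hab, add_right_inj]
      rw [← diag_eq_filter, diag_card]
      omega
    · exact (hm _ hw.1 _ hw.2 hab).trans (Nat.le_add_right _ _)
  calc E[A] = ∑ w ∈ A ×ˢ A, #{x ∈ A ×ˢ A | w.1 + x.1 = w.2 + x.2} := by
        rw [addEnergy, card_filter, sum_product]
        simp only [← card_filter]
    _ ≤ ∑ w ∈ A ×ˢ A, (m + if w.1 = w.2 then #A else 0) := sum_le_sum hfiber
    _ = #A ^ 2 * (m + 1) := by
        simp only [sum_add_distrib, sum_const, card_product, smul_eq_mul, sum_product, sum_ite_eq,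
          sum_ite_mem, inter_self]
        ring

end AddEnergy

lemma pow_le_iff_le_floor_rpow_inv {k x n : ℕ} (hk : k ≠ 0) :
    x ^ k ≤ n ↔ x ≤ ⌊(n : ℝ) ^ (k : ℝ)⁻¹⌋₊ := by
  rw [Nat.le_floor_iff (by positivity), Real.le_rpow_inv_iff_of_pos (by positivity)
    (by positivity) (by positivity), Real.rpow_natCast]
  exact_mod_cast Iff.rfl

def powersLE (k n : ℕ) : Finset ℕ := {x ∈ Icc 1 n | x ^ k ≤ n}.image (· ^ k)

lemma le_of_mem_powersLE {k n a : ℕ} (ha : a ∈ powersLE k n) : a ≤ n := by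
  obtain ⟨x, hx, rfl⟩ := mem_image.1 ha
  exact (mem_filter.1 hx).2

lemma card_powersLE_le {k : ℕ} (hk : k ≠ 0) (n : ℕ) :
    (#(powersLE k n) : ℝ) ≤ (n : ℝ) ^ (k : ℝ)⁻¹ := by
  have hsub : {x ∈ Icc 1 n | x ^ k ≤ n} ⊆ Icc 1 ⌊(n : ℝ) ^ (k : ℝ)⁻¹⌋₊ := fun x hx => by
    rw [mem_filter, mem_Icc] at hx
    exact mem_Icc.2 ⟨hx.1.1, (pow_le_iff_le_floor_rpow_inv hk).1 hx.2⟩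
  calc (#(powersLE k n) : ℝ) ≤ ⌊(n : ℝ) ^ (k : ℝ)⁻¹⌋₊ := by
        exact_mod_cast card_image_le.trans <| (card_le_card hsub).trans (Nat.card_Icc 1 _).le
    _ ≤ (n : ℝ) ^ (k : ℝ)⁻¹ := Nat.floor_le (by positivity)

lemma card_filter_powersLE_add_eq_add_le {k n a b : ℕ} {C δ : ℝ} (hk : 2 ≤ k) (hδ : 0 ≤ δ)
    (hdiv : ∀ h : ℕ, h ≠ 0 → (#h.divisors : ℝ) ≤ C * (h : ℝ) ^ δ)
    (ha : a ∈ powersLE k n) (hb : b ∈ powersLE k n) (hab : a ≠ b) :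
    (#{x ∈ powersLE k n ×ˢ powersLE k n | a + x.1 = b + x.2} : ℝ) ≤ C * (n : ℝ) ^ δ := by
  have hdist : Nat.dist a b ≤ n := by
    have := le_of_mem_powersLE ha
    have := le_of_mem_powersLE hb
    unfold Nat.dist
    omega
  have hC : 1 ≤ C := by simpa using hdiv 1 one_ne_zero
  calc (#{x ∈ powersLE k n ×ˢ powersLE k n | a + x.1 = b + x.2} : ℝ)
      ≤ #(Nat.dist a b).divisors := by exact_mod_cast card_filter_image_pow_add_eq_add_le hk hab _
    _ ≤ C * (Nat.dist a b : ℝ) ^ δ := hdiv _ (Nat.dist_pos_of_ne hab).ne'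
    _ ≤ C * (n : ℝ) ^ δ := by gcongr

lemma ncard_pow_add_pow_add_pow_eq {k : ℕ} (hk : k ≠ 0) (n : ℕ) :
    {x : ℕ × ℕ × ℕ | 0 < x.1 ∧ 0 < x.2.1 ∧ 0 < x.2.2 ∧ x.1 ^ k + x.2.1 ^ k + x.2.2 ^ k = n}.ncard =
      #{y ∈ powersLE k n ×ˢ powersLE k n ×ˢ powersLE k n | y.1 + y.2.1 + y.2.2 = n} := by
  set I := {x ∈ Icc 1 n | x ^ k ≤ n}
  have hpow : Function.Injective (· ^ k : ℕ → ℕ) := Nat.pow_left_injective hk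
  have hset : {x : ℕ × ℕ × ℕ | 0 < x.1 ∧ 0 < x.2.1 ∧ 0 < x.2.2 ∧
      x.1 ^ k + x.2.1 ^ k + x.2.2 ^ k = n} =
      ↑({x ∈ I ×ˢ I ×ˢ I | x.1 ^ k + x.2.1 ^ k + x.2.2 ^ k = n}) := by
    ext x
    have h1 := Nat.le_self_pow hk x.1
    have h2 := Nat.le_self_pow hk x.2.1
    have h3 := Nat.le_self_pow hk x.2.2
    simp only [Set.mem_ofPred_eq, coe_filter, mem_product, I, mem_filter, mem_Icc]
    omega
  rw [hset, Set.ncard_coe_finset, powersLE, ← prodMap_image_product, ← prodMap_image_product,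
    filter_image, card_image_of_injective _ (hpow.prodMap (hpow.prodMap hpow))]
  rfl

lemma le_sqrt_mul_rpow_of_sq_le {R K m C n k ε : ℝ} (hR : R ^ 2 ≤ K ^ 3 * (m + 1)) (hK0 : 0 ≤ K)
    (hK : K ≤ n ^ k⁻¹) (hm0 : 0 ≤ m) (hm : m ≤ C * n ^ (2 * ε)) (hn : 1 ≤ n) (hε : 0 ≤ ε) :
    R ≤ √(C + 1) * n ^ (3 / (2 * k) + ε) := by
  have hn0 : 0 < n := by linarith
  have hone : 1 ≤ n ^ (2 * ε) := Real.one_le_rpow hn (by positivity)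
  have hsq : K ^ 3 * (m + 1) ≤ (C + 1) * (n ^ (3 / (2 * k) + ε)) ^ 2 :=
    calc K ^ 3 * (m + 1) ≤ (n ^ k⁻¹) ^ 3 * ((C + 1) * n ^ (2 * ε)) := by
          gcongr
          linarith
      _ = (C + 1) * (n ^ (3 / (2 * k) + ε)) ^ 2 := by
          simp only [← Real.rpow_natCast, ← Real.rpow_mul hn0.le, mul_left_comm _ (C + 1),
            ← Real.rpow_add hn0]
          push_cast
          ring_nf
  calc R ≤ √((C + 1) * (n ^ (3 / (2 * k) + ε)) ^ 2) := Real.le_sqrt_of_sq_le (hR.trans hsq)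
    _ = √(C + 1) * n ^ (3 / (2 * k) + ε) := by
        rw [Real.sqrt_mul' _ (by positivity), Real.sqrt_sq (by positivity)]

theorem stmt_15 (k : ℕ) (hk : 2 ≤ k) :
    ∀ ε : ℝ, 0 < ε → ∃ C : ℝ, 0 < C ∧ ∀ n : ℕ, 1 ≤ n →
      (({x : ℕ × ℕ × ℕ | 0 < x.1 ∧ 0 < x.2.1 ∧ 0 < x.2.2 ∧
            x.1 ^ k + x.2.1 ^ k + x.2.2 ^ k = n}.ncard : ℝ)) ≤
        C * (n : ℝ) ^ (3 / (2 * (k : ℝ)) + ε) := by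
  intro ε hε
  obtain ⟨C, hC, hdiv⟩ := Nat.exists_card_divisors_le_mul_rpow (by positivity : 0 < 2 * ε)
  refine ⟨√(C + 1), by positivity, fun n hn => ?_⟩
  set A := powersLE k n
  set m := ⌊C * (n : ℝ) ^ (2 * ε)⌋₊
  have hfiber : ∀ a ∈ A, ∀ b ∈ A, a ≠ b → #{x ∈ A ×ˢ A | a + x.1 = b + x.2} ≤ m :=
    fun a ha b hb hab => Nat.le_floor <|
      card_filter_powersLE_add_eq_add_le hk (by positivity) hdiv ha hb hab
  have hsq : #{y ∈ A ×ˢ A ×ˢ A | y.1 + y.2.1 + y.2.2 = n} ^ 2 ≤ #A ^ 3 * (m + 1) :=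
    calc _ ≤ #A * E[A] := card_filter_add_add_eq_sq_le A n
      _ ≤ #A * (#A ^ 2 * (m + 1)) := Nat.mul_le_mul_left _ (addEnergy_le_card_sq_mul_succ A hfiber)
      _ = #A ^ 3 * (m + 1) := by ring
  rw [ncard_pow_add_pow_add_pow_eq (by omega) n]
  exact le_sqrt_mul_rpow_of_sq_le (by exact_mod_cast hsq) (by positivity)
    (card_powersLE_le (by omega) n) (by positivity) (Nat.floor_le (by positivity))
    (by exact_mod_cast hn) hε.le
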